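/- With the averaged states ρ^{ab}_odd = (1/2^{2n-4}) Σ_{k₁,k₂} ρ^{ab}_{k₁,k₂} where ρ^{ab}_{k₁,k₂} = (1/2^n) Σ_i |Ψ^{ab}_{k₁,k₂,i}⟩⟨Ψ^{ab}_{k₁,k₂,i}|, the trace distance D(ρ^{00}_odd, ρ^{11}_odd) = 1/2^{n-2}. -/

import Mathlib

open Matrix Finset
open scoped ComplexOrder Kronecker

open scoped MatrixOrder in
/-- Trace norm `tr √(Aᴴ A)` of a complex square matrix. -/
noncomputable def traceNorm {ι : Type*} [Fintype ι] [DecidableEq ι] (A : Matrix ι ι ℂ) : ℝ :=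
  ((CFC.sqrt (Aᴴ * A)).trace).re

/-- Bitwise XOR on bit strings. -/
def xo {n : ℕ} (i k : Fin n → Bool) : Fin n → Bool := fun j => xor (i j) (k j)

/-- Hamming weight of a bit string. -/
def wt {n : ℕ} (i : Fin n → Bool) : ℕ := (Finset.univ.filter fun j => i j = true).card

/-- Index type for `n = 2m` qubits, split into two halves of `m` qubits. -/
abbrev Idx (m : ℕ) := (Fin m → Bool) × (Fin m → Bool)

/-- Bitwise XOR on split bit strings. -/
def xo2 {m : ℕ} (i k : Idx m) : Idx m := (xo i.1 k.1, xo i.2 k.2)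

/-- Basis vector `|i⟩`. -/
def ket2 {m : ℕ} (i : Idx m) : Idx m → ℂ := fun j => if j = i then 1 else 0

/-- Sign `(-1)^a`. -/
def sgn (a : Bool) : ℂ := if a then -1 else 1

/-- The state `|Ψ^{ab}_{k₁,k₂,i}⟩ = ½(|i⟩+(-1)^a|i⊕k₁⟩+(-1)^b|i⊕k₂⟩+(-1)^{a+b}|i⊕k₁⊕k₂⟩)`. -/
noncomputable def Psi {m : ℕ} (k1 k2 i : Idx m) (a b : Bool) : Idx m → ℂ :=
  (1/2 : ℂ) • (ket2 i + sgn a • ket2 (xo2 i k1) + sgn b • ket2 (xo2 i k2)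
    + (sgn a * sgn b) • ket2 (xo2 (xo2 i k1) k2))

/-- Hermitian inner product `⟨u|v⟩`. -/
noncomputable def dot {m : ℕ} (u v : Idx m → ℂ) : ℂ :=
  ∑ j, starRingEnd ℂ (u j) * v j
/-- Outer product `|v⟩⟨v|`. -/
noncomputable def outer {m : ℕ} (v : Idx m → ℂ) : Matrix (Idx m) (Idx m) ℂ :=
  Matrix.of fun p q => v p * starRingEnd ℂ (v q)

/-- The set of admissible key pairs `(k₁,k₂) = ((k₁₁,k₁₂),(k₂₁,k₂₂))`:
`W_H(k₁₁)`, `W_H(k₂₂)` odd and `W_H(k₁₂)`, `W_H(k₂₁)` even. -/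
def KeyPairs (m : ℕ) : Finset (Idx m × Idx m) :=
  Finset.univ.filter fun q =>
    Odd (wt q.1.1) ∧ Even (wt q.1.2) ∧ Even (wt q.2.1) ∧ Odd (wt q.2.2)

/-- The averaged state `ρ^{ab}_odd`. -/
noncomputable def rhoOdd2 (m : ℕ) (a b : Bool) : Matrix (Idx m) (Idx m) ℂ :=
  ((1 : ℂ) / (2 ^ (4*m - 4) * 2 ^ (2*m))) •
    ∑ q ∈ KeyPairs m, ∑ i : Idx m, outer (Psi q.1 q.2 i a b)

/-!
Averaging over `i`, the states `Ψ⁰⁰` and `Ψ¹¹` (which differ only in the signs of their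
`i ⊕ k₁`, `i ⊕ k₂` components) give
`Σᵢ (|Ψ⁰⁰⟩⟨Ψ⁰⁰| - |Ψ¹¹⟩⟨Ψ¹¹|) = 2 (X_{k₁} + X_{k₂})`, where `X_k` permutes the basis by `p ↦ p ⊕ k`.
Averaging over the admissible key pairs weights `X_k` by the indicator that the two halves of `k`
have weights of opposite parity, which is `(1 - (-1)^{W_H(k)}) / 2`. Hence `ρ⁰⁰_odd - ρ¹¹_odd` is
`4^{1-m} (|+⟩⟨+| - |−⟩⟨−|)` for the orthonormal states `|±⟩ = |±⟩^{⊗2m}`, and its trace norm is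
twice that constant.
-/

section TraceNorm

variable {ι : Type*} [Fintype ι] [DecidableEq ι]

open scoped MatrixOrder in
/-- By orthogonality the cross terms vanish, so `|u⟩⟨u| + |v⟩⟨v|` is the positive square root
of `(|u⟩⟨u| - |v⟩⟨v|)²`. -/
theorem traceNorm_vecMulVec_sub_of_orthogonal (u v : ι → ℂ) (huv : star u ⬝ᵥ v = 0) :
    traceNorm (vecMulVec u (star u) - vecMulVec v (star v))
      = (star u ⬝ᵥ u).re + (star v ⬝ᵥ v).re := by
  set P := vecMulVec u (star u)
  set Q := vecMulVec v (star v)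
  have hvu : star v ⬝ᵥ u = 0 := by rw [star_dotProduct, huv, star_zero]
  have hPQ : P * Q = 0 := by simp [P, Q, vecMulVec_mul_vecMulVec, huv]
  have hQP : Q * P = 0 := by simp [P, Q, vecMulVec_mul_vecMulVec, hvu]
  have hsq : (P - Q)ᴴ * (P - Q) = (P + Q) ^ 2 := by
    simp only [P, Q, conjTranspose_sub, conjTranspose_vecMulVec, star_star]
    rw [sq, sub_mul, mul_sub, mul_sub, add_mul, mul_add, mul_add, hPQ, hQP]
    abel
  have hnonneg : 0 ≤ P + Q := nonneg_iff_posSemidef.2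
    ((posSemidef_vecMulVec_self_star u).add (posSemidef_vecMulVec_self_star v))
  rw [traceNorm, hsq, CFC.sqrt_sq (P + Q) hnonneg, trace_add, trace_vecMulVec, trace_vecMulVec,
    dotProduct_comm u, dotProduct_comm v, Complex.add_re]

end TraceNorm

section Parity

variable {m : ℕ}

/-- The character `(-1)^{W_H(j)}`, written as a product over the bits of `j`. -/
noncomputable def paritySign (j : Fin m → Bool) : ℂ := ∏ x, if j x then -1 else 1

theorem paritySign_eq_neg_one_pow_wt (j : Fin m → Bool) : paritySign j = (-1) ^ wt j := by
  rw [paritySign, prod_ite, prod_const, prod_const_one, mul_one, wt]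

theorem paritySign_add (a b : Fin m → Bool) :
    paritySign (a + b) = paritySign a * paritySign b := by
  have hbit (p q : Bool) :
      (if p + q then (-1 : ℂ) else 1) = (if p then -1 else 1) * (if q then -1 else 1) := by
    cases p <;> cases q <;> norm_num [Bool.add_eq_xor]
  simp only [paritySign, ← prod_mul_distrib, Pi.add_apply, hbit]

theorem conj_paritySign (j : Fin m → Bool) : starRingEnd ℂ (paritySign j) = paritySign j := by
  rw [paritySign_eq_neg_one_pow_wt]; simp

theorem paritySign_mul_self (j : Fin m → Bool) : paritySign j * paritySign j = 1 := by
  rw [paritySign_eq_neg_one_pow_wt, ← pow_add, ← two_mul, pow_mul]; simp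

theorem sum_paritySign (hm : 1 ≤ m) : ∑ j : Fin m → Bool, paritySign j = 0 := by
  have hbit : ∑ b : Bool, (if b then (-1 : ℂ) else 1) = 0 := by simp
  simp only [paritySign]
  rw [← Fintype.prod_sum fun (_ : Fin m) (b : Bool) => if b then (-1 : ℂ) else 1]
  exact prod_eq_zero (mem_univ ⟨0, hm⟩) hbit

theorem ite_odd_wt (j : Fin m → Bool) :
    (if Odd (wt j) then 1 else 0 : ℂ) = (1 - paritySign j) / 2 := by
  rw [paritySign_eq_neg_one_pow_wt]
  rcases Nat.even_or_odd (wt j) with h | h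
  · simp [h.neg_one_pow, Nat.not_odd_iff_even.2 h]
  · simp [h.neg_one_pow, h]

theorem ite_even_wt (j : Fin m → Bool) :
    (if Even (wt j) then 1 else 0 : ℂ) = (1 + paritySign j) / 2 := by
  rw [paritySign_eq_neg_one_pow_wt]
  rcases Nat.even_or_odd (wt j) with h | h
  · simp [h.neg_one_pow, h]
  · simp [h.neg_one_pow, Nat.not_even_iff_odd.2 h]

theorem sum_one_sub_paritySign_div_two (hm : 1 ≤ m) :
    ∑ j : Fin m → Bool, (1 - paritySign j) / 2 = 2 ^ m / 2 := by
  simp [← sum_div, sum_sub_distrib, sum_paritySign hm]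

theorem sum_one_add_paritySign_div_two (hm : 1 ≤ m) :
    ∑ j : Fin m → Bool, (1 + paritySign j) / 2 = 2 ^ m / 2 := by
  simp [← sum_div, sum_add_distrib, sum_paritySign hm]

end Parity

section Translation

variable {m : ℕ}

theorem xo2_eq_add (i k : Idx m) : xo2 i k = i + k := rfl

@[simp] theorem idx_add_self (a : Idx m) : a + a = 0 := by
  ext <;> exact BooleanRing.add_self _

@[simp] theorem idx_add_add_cancel_left (a b : Idx m) : a + (a + b) = b := by
  rw [← add_assoc, idx_add_self, zero_add]

theorem idx_eq_add_iff {a b c : Idx m} : a = b + c ↔ a + c = b := by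
  constructor <;> rintro rfl <;> simp [add_assoc]

theorem ket2_add (x k p : Idx m) : ket2 (x + k) p = ket2 x (p + k) := by
  simp only [ket2, idx_eq_add_iff]

theorem ket2_apply_add (x y d : Idx m) : ket2 y (x + d) = ket2 (x + y) d := by
  simp only [ket2, idx_eq_add_iff, add_comm d, eq_comm (b := y)]

theorem ket2_dotProduct (x : Idx m) (v : Idx m → ℂ) : ket2 x ⬝ᵥ v = v x := by
  simp [ket2, dotProduct]

theorem conj_ket2 (x p : Idx m) : starRingEnd ℂ (ket2 x p) = ket2 x p := by
  unfold ket2; split_ifs <;> simp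

theorem conj_sgn (a : Bool) : starRingEnd ℂ (sgn a) = sgn a := by
  unfold sgn; split_ifs <;> simp

theorem conj_Psi (k1 k2 i p : Idx m) (a b : Bool) :
    starRingEnd ℂ (Psi k1 k2 i a b p) = Psi k1 k2 i a b p := by
  simp only [Psi, Pi.add_apply, Pi.smul_apply, smul_eq_mul, map_add, map_mul, conj_ket2,
    conj_sgn, map_div₀, map_one, map_ofNat]

theorem Psi_apply_eq_Psi_zero (k1 k2 i p : Idx m) (a b : Bool) :
    Psi k1 k2 i a b p = Psi k1 k2 0 a b (p + i) := by
  simp only [Psi, xo2_eq_add, Pi.add_apply, Pi.smul_apply, zero_add, ← ket2_add]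
  ac_rfl

theorem sum_outer_Psi_apply (k1 k2 p q : Idx m) (a b : Bool) :
    (∑ i, outer (Psi k1 k2 i a b)) p q
      = ∑ j, Psi k1 k2 0 a b j * Psi k1 k2 0 a b (j + (p + q)) := by
  simp only [Matrix.sum_apply, outer, Matrix.of_apply, conj_Psi, Psi_apply_eq_Psi_zero k1 k2 _ p,
    Psi_apply_eq_Psi_zero k1 k2 _ q]
  exact Fintype.sum_equiv (Equiv.addLeft p) _ _ fun i => by simp [add_comm, add_left_comm]

theorem sum_Psi_mul_Psi_add_sub (k1 k2 d : Idx m) :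
    ∑ j, (Psi k1 k2 0 false false j * Psi k1 k2 0 false false (j + d)
      - Psi k1 k2 0 true true j * Psi k1 k2 0 true true (j + d))
      = 2 * (ket2 k1 d + ket2 k2 d) := by
  rw [sum_sub_distrib]
  change Psi k1 k2 0 false false ⬝ᵥ (fun j => Psi k1 k2 0 false false (j + d))
    - Psi k1 k2 0 true true ⬝ᵥ (fun j => Psi k1 k2 0 true true (j + d)) = _
  simp only [Psi, xo2_eq_add, zero_add, add_dotProduct, smul_dotProduct, ket2_dotProduct,
    Pi.add_apply, Pi.smul_apply, ket2_apply_add]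
  -- bring every `k + k'` with `k, k' ∈ {0, k₁, k₂, k₁ + k₂}` back into that set
  simp only [add_assoc, (add_comm : ∀ a b : Idx m, a + b = b + a),
    (add_left_comm : ∀ a b c : Idx m, a + (b + c) = b + (a + c)), idx_add_self,
    idx_add_add_cancel_left, add_zero]
  simp only [smul_eq_mul, show sgn false = 1 from rfl, show sgn true = -1 from rfl]
  ring

theorem sum_outer_Psi_sub_apply (k1 k2 p q : Idx m) :
    (∑ i, outer (Psi k1 k2 i false false) - ∑ i, outer (Psi k1 k2 i true true)) p q
      = 2 * (ket2 k1 (p + q) + ket2 k2 (p + q)) := by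
  rw [Matrix.sub_apply, sum_outer_Psi_apply, sum_outer_Psi_apply, ← sum_sub_distrib,
    sum_Psi_mul_Psi_add_sub]

end Translation

section Keys

variable {m : ℕ}

def oddEvenKeys (m : ℕ) : Finset (Idx m) := univ.filter fun k => Odd (wt k.1) ∧ Even (wt k.2)

def evenOddKeys (m : ℕ) : Finset (Idx m) := univ.filter fun k => Even (wt k.1) ∧ Odd (wt k.2)

theorem keyPairs_eq_product (m : ℕ) : KeyPairs m = oddEvenKeys m ×ˢ evenOddKeys m := by
  ext
  simp only [KeyPairs, oddEvenKeys, evenOddKeys, mem_filter, mem_univ, true_and, mem_product]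
  tauto

theorem ite_mem_oddEvenKeys (k : Idx m) :
    (if k ∈ oddEvenKeys m then 1 else 0 : ℂ)
      = (1 - paritySign k.1) / 2 * ((1 + paritySign k.2) / 2) := by
  rw [oddEvenKeys, ← ite_odd_wt, ← ite_even_wt, ite_zero_mul_ite_zero, mul_one]
  simp

theorem ite_mem_evenOddKeys (k : Idx m) :
    (if k ∈ evenOddKeys m then 1 else 0 : ℂ)
      = (1 + paritySign k.1) / 2 * ((1 - paritySign k.2) / 2) := by
  rw [evenOddKeys, ← ite_odd_wt, ← ite_even_wt, ite_zero_mul_ite_zero, mul_one]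
  simp

theorem card_oddEvenKeys (hm : 1 ≤ m) : (#(oddEvenKeys m) : ℂ) = (2 ^ m / 2) ^ 2 := by
  rw [cast_card, ← Fintype.sum_ite_mem, Fintype.sum_prod_type]
  simp only [ite_mem_oddEvenKeys, ← Fintype.sum_mul_sum, sum_one_sub_paritySign_div_two hm,
    sum_one_add_paritySign_div_two hm, sq]

theorem card_evenOddKeys (hm : 1 ≤ m) : (#(evenOddKeys m) : ℂ) = (2 ^ m / 2) ^ 2 := by
  rw [cast_card, ← Fintype.sum_ite_mem, Fintype.sum_prod_type]
  simp only [ite_mem_evenOddKeys, ← Fintype.sum_mul_sum, sum_one_sub_paritySign_div_two hm,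
    sum_one_add_paritySign_div_two hm, sq]

theorem sum_keyPairs_ket2 (hm : 1 ≤ m) (d : Idx m) :
    ∑ k ∈ KeyPairs m, (ket2 k.1 d + ket2 k.2 d)
      = (2 ^ m / 2) ^ 2 * ((1 - paritySign d.1 * paritySign d.2) / 2) := by
  have hsum (s : Finset (Idx m)) : ∑ k ∈ s, ket2 k d = if d ∈ s then 1 else 0 :=
    sum_ite_eq s d fun _ => 1
  rw [keyPairs_eq_product, sum_product]
  simp only [sum_add_distrib, sum_const, nsmul_eq_mul, ← mul_sum, hsum, ite_mem_oddEvenKeys,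
    ite_mem_evenOddKeys, card_oddEvenKeys hm, card_evenOddKeys hm]
  ring

end Keys

section Difference

variable {m : ℕ}

/-- Multiples of `|+⟩^{⊗2m}` and `|−⟩^{⊗2m}`, scaled so that `ρ⁰⁰_odd - ρ¹¹_odd` is the
difference of their outer products. -/
noncomputable def plusVec (m : ℕ) : Idx m → ℂ := fun _ => 2 / 4 ^ m

noncomputable def minusVec (m : ℕ) : Idx m → ℂ :=
  fun k => 2 / 4 ^ m * (paritySign k.1 * paritySign k.2)

theorem star_plusVec_dotProduct_minusVec (hm : 1 ≤ m) : star (plusVec m) ⬝ᵥ minusVec m = 0 := by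
  simp only [dotProduct, plusVec, minusVec, Pi.star_apply, ← mul_sum, Fintype.sum_prod_type,
    sum_paritySign hm, mul_zero, sum_const_zero]

theorem star_plusVec_dotProduct_self (m : ℕ) :
    star (plusVec m) ⬝ᵥ plusVec m = ((4 / 4 ^ m : ℝ) : ℂ) := by
  have hcard : (Fintype.card (Idx m) : ℂ) = 4 ^ m := by
    simp [← mul_pow]
  simp only [dotProduct, plusVec, Pi.star_apply, sum_const, card_univ, nsmul_eq_mul, hcard]
  simp only [star_div₀, star_ofNat, star_pow, Complex.ofReal_div, Complex.ofReal_ofNat,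
    Complex.ofReal_pow]
  field_simp
  ring

theorem star_minusVec_dotProduct_self (m : ℕ) :
    star (minusVec m) ⬝ᵥ minusVec m = ((4 / 4 ^ m : ℝ) : ℂ) := by
  rw [← star_plusVec_dotProduct_self]
  refine sum_congr rfl fun k _ => ?_
  simp only [plusVec, minusVec, Pi.star_apply, star_mul', RCLike.star_def, conj_paritySign]
  linear_combination starRingEnd ℂ (2 / 4 ^ m) * (2 / 4 ^ m) *
    (paritySign_mul_self k.1 * paritySign k.2 * paritySign k.2 + paritySign_mul_self k.2)

theorem rhoOdd2_sub_eq (hm : 1 ≤ m) :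
    rhoOdd2 m false false - rhoOdd2 m true true
      = vecMulVec (plusVec m) (star (plusVec m)) - vecMulVec (minusVec m) (star (minusVec m)) := by
  ext p q
  have hsign : paritySign (p + q).1 * paritySign (p + q).2
      = paritySign p.1 * paritySign p.2 * (paritySign q.1 * paritySign q.2) := by
    rw [Prod.fst_add, Prod.snd_add, paritySign_add, paritySign_add]; ring
  rw [rhoOdd2, rhoOdd2, ← smul_sub, ← sum_sub_distrib, Matrix.smul_apply, Matrix.sum_apply]
  simp only [sum_outer_Psi_sub_apply, ← mul_sum, sum_keyPairs_ket2 hm, hsign]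
  simp only [Matrix.sub_apply, vecMulVec_apply, plusVec, minusVec, Pi.star_apply, star_mul',
    RCLike.star_def, conj_paritySign, map_div₀, map_pow, map_ofNat]
  obtain ⟨n, rfl⟩ : ∃ n, m = n + 1 := ⟨m - 1, by omega⟩
  rw [show 4 * (n + 1) - 4 = 4 * n by omega]
  simp only [show (4 : ℂ) = 2 ^ 2 by norm_num, ← pow_mul, smul_eq_mul]
  field_simp
  ring

end Difference

theorem traceDist_rho00_rho11 (m : ℕ) (hm : 1 ≤ m) :
    (1/2 : ℝ) * traceNorm (rhoOdd2 m false false - rhoOdd2 m true true)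
      = 1 / 2 ^ (2*m - 2) := by
  rw [rhoOdd2_sub_eq hm, traceNorm_vecMulVec_sub_of_orthogonal _ _
    (star_plusVec_dotProduct_minusVec hm), star_plusVec_dotProduct_self,
    star_minusVec_dotProduct_self, Complex.ofReal_re]
  obtain ⟨n, rfl⟩ : ∃ n, m = n + 1 := ⟨m - 1, by omega⟩
  rw [show 2 * (n + 1) - 2 = 2 * n by omega, pow_mul]
  field_simp
  ring
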